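/- Let a > 0, b ≥ 0, c > 0, u₀ ∈ ℝ, and let u be an axisymmetric stationary rotating profile on [0, c] with u(0) = u₀, i.e. u is differentiable on [0, c] and u'(r)/√(1 + u'(r)²) = r(a r² + 2b)/4 for all r ∈ [0, c]. Then for every r ∈ (0, c], u(r) − u₀ ≤ (4 − √(16 − r²(a r² + 2b)²)) / (a r² + 2b); and if moreover b > 0, then also (2 − √(4 − b² r²)) / b ≤ u(r) − u₀ for every r ∈ (0, c]. -/

import Mathlib

/-!
The first integral says that the sine of the inclination angle of the profile at distance `s`
from the axis is `s (a s² + 2b) / 4`. For `0 ≤ s ≤ r` this lies between `(b / 2) s` and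
`((a r² + 2b) / 4) s`, the corresponding sines for spheres of radii `2 / b` and `4 / (a r² + 2b)`.
As the sine of the angle increases with the slope, the slope of `u` is squeezed between those of
the two spheres, and integrating over `[0, r]` bounds `u r - u₀` by the heights of the two caps.
-/

open Set

lemma strictMono_div_sqrt_one_add_sq : StrictMono fun x : ℝ => x / √(1 + x ^ 2) := by
  simp_rw [← Real.sin_arctan]
  intro x y hxy
  exact Real.strictMonoOn_sin
    ⟨(Real.neg_pi_div_two_lt_arctan x).le, (Real.arctan_lt_pi_div_two x).le⟩
    ⟨(Real.neg_pi_div_two_lt_arctan y).le, (Real.arctan_lt_pi_div_two y).le⟩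
    (Real.arctan_strictMono hxy)

lemma div_sqrt_one_add_sq_lt_one (x : ℝ) : x / √(1 + x ^ 2) < 1 := by
  rw [div_lt_one (by positivity)]
  calc x ≤ |x| := le_abs_self x
    _ = √(x ^ 2) := (Real.sqrt_sq_eq_abs x).symm
    _ < √(1 + x ^ 2) := Real.sqrt_lt_sqrt (sq_nonneg x) (by linarith)

lemma div_sqrt_one_add_sq_div_sqrt_one_sub_sq {t : ℝ} (ht : t ^ 2 < 1) :
    t / √(1 - t ^ 2) / √(1 + (t / √(1 - t ^ 2)) ^ 2) = t := by
  have hs : 0 < √(1 - t ^ 2) := Real.sqrt_pos.2 (by linarith)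
  have hs2 : √(1 - t ^ 2) ^ 2 = 1 - t ^ 2 := Real.sq_sqrt (by linarith)
  have h : 1 + (t / √(1 - t ^ 2)) ^ 2 = (1 / √(1 - t ^ 2)) ^ 2 := by
    field_simp
    linarith
  rw [h, Real.sqrt_sq (by positivity)]
  field_simp

lemma sub_le_sub_of_hasDerivAt_le {f g f' g' : ℝ → ℝ} {p q : ℝ} (hpq : p ≤ q)
    (hf : ∀ x ∈ Icc p q, HasDerivAt f (f' x) x) (hg : ∀ x ∈ Icc p q, HasDerivAt g (g' x) x)
    (hle : ∀ x ∈ Ioo p q, f' x ≤ g' x) :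
    f q - f p ≤ g q - g p := by
  have hmono : MonotoneOn (fun x => g x - f x) (Icc p q) := by
    refine monotoneOn_of_hasDerivWithinAt_nonneg (convex_Icc p q)
      (fun x hx => ((hg x hx).sub (hf x hx)).continuousAt.continuousWithinAt)
      (fun x hx => ?_) (fun x hx => ?_) (f' := fun x => g' x - f' x)
    · rw [interior_Icc] at hx
      exact ((hg x (Ioo_subset_Icc_self hx)).sub (hf x (Ioo_subset_Icc_self hx))).hasDerivWithinAt
    · rw [interior_Icc] at hx
      exact sub_nonneg.2 (hle x hx)
  linarith [hmono (left_mem_Icc.2 hpq) (right_mem_Icc.2 hpq) hpq]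

/-- Height, at distance `r` from the axis, of a sphere of radius `1 / k` above its lowest point. -/
noncomputable def sphericalCapHeight (k r : ℝ) : ℝ := (1 - √(1 - (k * r) ^ 2)) / k

@[simp]
lemma sphericalCapHeight_zero (k : ℝ) : sphericalCapHeight k 0 = 0 := by
  simp [sphericalCapHeight]

lemma hasDerivAt_sphericalCapHeight {k r : ℝ} (hk : k ≠ 0) (hr : (k * r) ^ 2 < 1) :
    HasDerivAt (sphericalCapHeight k) (k * r / √(1 - (k * r) ^ 2)) r := by
  have hpos : 0 < 1 - (k * r) ^ 2 := by linarith
  have hinner : HasDerivAt (fun y => 1 - (k * y) ^ 2) (-(2 * k ^ 2 * r)) r :=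
    ((((hasDerivAt_id' r).const_mul k).pow 2).const_sub 1).congr_deriv (by ring)
  refine (((hinner.sqrt hpos.ne').const_sub 1).div_const k).congr_deriv ?_
  field_simp

lemma sphericalCapHeight_div {A n : ℝ} (hn : 0 < n) (r : ℝ) :
    sphericalCapHeight (A / n) r = (n - √(n ^ 2 - r ^ 2 * A ^ 2)) / A := by
  have h : n ^ 2 - r ^ 2 * A ^ 2 = n ^ 2 * (1 - (A / n * r) ^ 2) := by
    field_simp
  rw [sphericalCapHeight, h, Real.sqrt_mul (sq_nonneg n), Real.sqrt_sq hn.le]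
  field_simp

section Comparison

variable {u u' : ℝ → ℝ} {k r : ℝ}

lemma sq_mul_lt_one_of_mem_Icc (hk : 0 < k) (hkr : k * r < 1) {s : ℝ} (hs : s ∈ Icc 0 r) :
    (k * s) ^ 2 < 1 := by
  have h0 : 0 ≤ k * s := mul_nonneg hk.le hs.1
  have hle : k * s ≤ k * r := mul_le_mul_of_nonneg_left hs.2 hk.le
  nlinarith

/- `k * s / √(1 - (k * s) ^ 2)` is the slope of the sphere at distance `s`, and `x / √(1 + x ^ 2)`
turns a slope into the sine of the inclination angle, so comparing slopes is comparing sines. -/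
theorem sub_le_sphericalCapHeight (hk : 0 < k) (hkr : k * r < 1) (hr : 0 ≤ r)
    (hu : ∀ s ∈ Icc 0 r, HasDerivAt u (u' s) s)
    (hslope : ∀ s ∈ Icc 0 r, u' s / √(1 + u' s ^ 2) ≤ k * s) :
    u r - u 0 ≤ sphericalCapHeight k r := by
  have hu' : ∀ s ∈ Ioo 0 r, u' s ≤ k * s / √(1 - (k * s) ^ 2) := fun s hs => by
    refine strictMono_div_sqrt_one_add_sq.le_iff_le.1 ?_
    rw [div_sqrt_one_add_sq_div_sqrt_one_sub_sq
      (sq_mul_lt_one_of_mem_Icc hk hkr (Ioo_subset_Icc_self hs))]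
    exact hslope s (Ioo_subset_Icc_self hs)
  simpa using sub_le_sub_of_hasDerivAt_le hr hu
    (fun s hs => hasDerivAt_sphericalCapHeight hk.ne' (sq_mul_lt_one_of_mem_Icc hk hkr hs)) hu'

theorem sphericalCapHeight_le_sub (hk : 0 < k) (hkr : k * r < 1) (hr : 0 ≤ r)
    (hu : ∀ s ∈ Icc 0 r, HasDerivAt u (u' s) s)
    (hslope : ∀ s ∈ Icc 0 r, k * s ≤ u' s / √(1 + u' s ^ 2)) :
    sphericalCapHeight k r ≤ u r - u 0 := by
  have hu' : ∀ s ∈ Ioo 0 r, k * s / √(1 - (k * s) ^ 2) ≤ u' s := fun s hs => by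
    refine strictMono_div_sqrt_one_add_sq.le_iff_le.1 ?_
    rw [div_sqrt_one_add_sq_div_sqrt_one_sub_sq
      (sq_mul_lt_one_of_mem_Icc hk hkr (Ioo_subset_Icc_self hs))]
    exact hslope s (Ioo_subset_Icc_self hs)
  simpa using sub_le_sub_of_hasDerivAt_le hr
    (fun s hs => hasDerivAt_sphericalCapHeight hk.ne' (sq_mul_lt_one_of_mem_Icc hk hkr hs)) hu hu'

end Comparison

theorem stmt_6_general (a b c u₀ : ℝ) (ha : 0 < a) (hb : 0 ≤ b)
    (u u' : ℝ → ℝ)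
    (hu : ∀ r ∈ Icc (0:ℝ) c, HasDerivAt u (u' r) r)
    (heq : ∀ r ∈ Icc (0:ℝ) c, u' r / Real.sqrt (1 + u' r ^ 2) = r * (a * r ^ 2 + 2 * b) / 4)
    (h0 : u 0 = u₀) :
    (∀ r, 0 < r → r ≤ c →
        u r - u₀ ≤ (4 - Real.sqrt (16 - r ^ 2 * (a * r ^ 2 + 2 * b) ^ 2)) / (a * r ^ 2 + 2 * b)) ∧
      (0 < b → ∀ r, 0 < r → r ≤ c →
        (2 - Real.sqrt (4 - b ^ 2 * r ^ 2)) / b ≤ u r - u₀) := by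
  have hsub {r : ℝ} (hrc : r ≤ c) : Icc 0 r ⊆ Icc 0 c := Icc_subset_Icc_right hrc
  have hslope_lt {r : ℝ} (hr : 0 < r) (hrc : r ≤ c) : r * (a * r ^ 2 + 2 * b) / 4 < 1 :=
    heq r ⟨hr.le, hrc⟩ ▸ div_sqrt_one_add_sq_lt_one (u' r)
  subst h0
  refine ⟨fun r hr hrc => ?_, fun hb' r hr hrc => ?_⟩
  · have h := sub_le_sphericalCapHeight (k := (a * r ^ 2 + 2 * b) / 4) (by positivity)
      (by linarith [hslope_lt hr hrc]) hr.le (fun s hs => hu s (hsub hrc hs)) fun s hs => by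
        rw [heq s (hsub hrc hs)]
        nlinarith [mul_nonneg (mul_nonneg ha.le hs.1) (sub_nonneg.2 (pow_le_pow_left₀ hs.1 hs.2 2))]
    rw [sphericalCapHeight_div four_pos] at h
    convert h using 4
    norm_num
  · have h := sphericalCapHeight_le_sub (k := b / 2) (by positivity)
      (by nlinarith [hslope_lt hr hrc, pow_pos hr 3]) hr.le (fun s hs => hu s (hsub hrc hs))
      fun s hs => by
        rw [heq s (hsub hrc hs)]
        nlinarith [mul_nonneg (mul_nonneg ha.le hs.1) (sq_nonneg s)]
    rw [sphericalCapHeight_div two_pos] at h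
    convert h using 4
    ring

/-- Theorem (height estimates for axisymmetric profiles of type I):
`u(r) - u₀ ≤ (4 - √(16 - r²(ar²+2b)²))/(ar²+2b)` for `0 < r ≤ c`, and if `b > 0`
also `(2 - √(4 - b²r²))/b ≤ u(r) - u₀`. -/
theorem stmt_6 (a b c u₀ : ℝ) (ha : 0 < a) (hb : 0 ≤ b) (hc : 0 < c)
    (u u' : ℝ → ℝ)
    (hu : ∀ r ∈ Icc (0:ℝ) c, HasDerivAt u (u' r) r)
    (heq : ∀ r ∈ Icc (0:ℝ) c, u' r / Real.sqrt (1 + u' r ^ 2) = r * (a * r ^ 2 + 2 * b) / 4)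
    (h0 : u 0 = u₀) :
    (∀ r, 0 < r → r ≤ c →
        u r - u₀ ≤ (4 - Real.sqrt (16 - r ^ 2 * (a * r ^ 2 + 2 * b) ^ 2)) / (a * r ^ 2 + 2 * b)) ∧
      (0 < b → ∀ r, 0 < r → r ≤ c →
        (2 - Real.sqrt (4 - b ^ 2 * r ^ 2)) / b ≤ u r - u₀) :=
  stmt_6_general a b c u₀ ha hb u u' hu heq h0
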